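/- arXiv:1511.00877 — 5 statements merged into one kernel-verified Lean document; each statement's English description precedes it below -/
import Mathlib

section
/- Let A be an m×n matrix over ℝ≥0 and b ∈ ℝ≥0^m. Suppose N' is a proper subset of {1,…,n} with ⋃_{j∈N'} M_j(A,b) = supp(b), and let i ∉ N'. Then for every α ∈ ℝ≥0 with (α : [0,∞]) ≤ γ*_i(A,b) there exists x ∈ ℝ≥0^n with A⊗x = b and x_i = α. -/
open scoped NNReal ENNReal

noncomputable section

namespace MaxAlg

/-- Max-algebraic matrix–vector product over ℝ≥0: (A⊗x)_i = max_j a_{ij}·x_j. -/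
def mulVec {m n : ℕ} (A : Matrix (Fin m) (Fin n) ℝ≥0) (x : Fin n → ℝ≥0) :
    Fin m → ℝ≥0 :=
  fun i => Finset.univ.sup fun j => A i j * x j

/-- Support of a vector. -/
def supp {m : ℕ} (x : Fin m → ℝ≥0) : Set (Fin m) := {i | x i ≠ 0}

/-- Eigencone V(A,λ) = {x : A⊗x = λ·x}. -/
def eigencone {n : ℕ} (A : Matrix (Fin n) (Fin n) ℝ≥0) (lam : ℝ≥0) :
    Set (Fin n → ℝ≥0) :=
  {x | mulVec A x = fun i => lam * x i}

/-- A cycle of length `k ≥ 1` is encoded as `σ : ℕ → Fin n` with `σ k = σ 0`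
(standing for a function on ℤ/kℤ). -/
def IsCycle {n : ℕ} (k : ℕ) (σ : ℕ → Fin n) : Prop := 1 ≤ k ∧ σ k = σ 0

/-- The cycle lies in a set S: all its values belong to S. -/
def LiesIn {n : ℕ} (k : ℕ) (σ : ℕ → Fin n) (S : Set (Fin n)) : Prop :=
  ∀ t < k, σ t ∈ S

/-- Weight of a cycle in A: ∏_t a_{σ(t),σ(t+1)}. -/
def cycleWeight {n : ℕ} (A : Matrix (Fin n) (Fin n) ℝ≥0) (k : ℕ) (σ : ℕ → Fin n) : ℝ≥0 :=
  ∏ t ∈ Finset.range k, A (σ t) (σ (t + 1))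

/-- γ*_j(A,b): the greatest α ∈ [0,∞] with α·a_{ij} ≤ b_i for all i
(conventions 0·∞ = ∞·0 = 0 are built into ℝ≥0∞ multiplication). -/
def gammaStar {m n : ℕ} (A : Matrix (Fin m) (Fin n) ℝ≥0) (b : Fin m → ℝ≥0) (j : Fin n) :
    ℝ≥0∞ :=
  sSup {α : ℝ≥0∞ | ∀ i, α * (A i j : ℝ≥0∞) ≤ (b i : ℝ≥0∞)}

/-- M_j(A,b) = {i : a_{ij}·γ*_j(A,b) = b_i ≠ 0}. -/
def Mset {m n : ℕ} (A : Matrix (Fin m) (Fin n) ℝ≥0) (b : Fin m → ℝ≥0) (j : Fin n) :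
    Set (Fin m) :=
  {i | (A i j : ℝ≥0∞) * gammaStar A b j = (b i : ℝ≥0∞) ∧ b i ≠ 0}

/-- Max-algebraic column span of A. -/
def span {m n : ℕ} (A : Matrix (Fin m) (Fin n) ℝ≥0) : Set (Fin m → ℝ≥0) :=
  {y | ∃ c : Fin n → ℝ≥0, ∀ r, y r = Finset.univ.sup fun j => A r j * c j}

/-- Max-algebraic column span of A with its i-th column removed. -/
def spanMinus {m n : ℕ} (A : Matrix (Fin m) (Fin n) ℝ≥0) (i : Fin n) :
    Set (Fin m → ℝ≥0) :=
  {y | ∃ c : Fin n → ℝ≥0, ∀ r, y r = (Finset.univ.erase i).sup fun j => A r j * c j}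

/-- N^λ(A) = {i : ∃ x ∈ V(A,λ), x_i > 0}. -/
def Nlam {n : ℕ} (A : Matrix (Fin n) (Fin n) ℝ≥0) (lam : ℝ≥0) : Set (Fin n) :=
  {i | ∃ x ∈ eigencone A lam, 0 < x i}

/-- (i,j) is an edge of crit(A,λ). -/
def CritEdge {n : ℕ} (A : Matrix (Fin n) (Fin n) ℝ≥0) (lam : ℝ≥0) (i j : Fin n) : Prop :=
  ∃ k σ, IsCycle k σ ∧ LiesIn k σ (Nlam A lam) ∧ cycleWeight A k σ = lam ^ k ∧
    ∃ t < k, σ t = i ∧ σ (t + 1) = j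

/-- i is a critical node: some cycle lying in N^λ(A) with weight λ^k passes through i. -/
def CritNode {n : ℕ} (A : Matrix (Fin n) (Fin n) ℝ≥0) (lam : ℝ≥0) (i : Fin n) : Prop :=
  ∃ k σ, IsCycle k σ ∧ LiesIn k σ (Nlam A lam) ∧ cycleWeight A k σ = lam ^ k ∧
    ∃ t < k, σ t = i

/-- (i,j) is an edge of crit(A,x,λ). -/
def CritEdgeOn {n : ℕ} (A : Matrix (Fin n) (Fin n) ℝ≥0) (lam : ℝ≥0) (x : Fin n → ℝ≥0)
    (i j : Fin n) : Prop :=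
  ∃ k σ, IsCycle k σ ∧ LiesIn k σ (supp x) ∧ cycleWeight A k σ = lam ^ k ∧
    ∃ t < k, σ t = i ∧ σ (t + 1) = j

/-- x is a simple image eigenvector of A associated with λ. -/
def SimpleImageEig {n : ℕ} (A : Matrix (Fin n) (Fin n) ℝ≥0) (lam : ℝ≥0)
    (x : Fin n → ℝ≥0) : Prop :=
  x ∈ eigencone A lam ∧
    ∀ y : Fin n → ℝ≥0, mulVec A y = (fun i => lam * x i) → y = x

/-- The box (interval) determined by component intervals X_j. -/
def box {n : ℕ} (X : Fin n → Set ℝ≥0) : Set (Fin n → ℝ≥0) := {x | ∀ j, x j ∈ X j}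

/-- Each component set is a nonempty order-convex interval of ℝ≥0. -/
def IsInterval {n : ℕ} (X : Fin n → Set ℝ≥0) : Prop :=
  ∀ j, (X j).Nonempty ∧ (X j).OrdConnected

/-- A has X-simple image eigencone associated with λ. -/
def XSimple {n : ℕ} (A : Matrix (Fin n) (Fin n) ℝ≥0) (lam : ℝ≥0)
    (X : Fin n → Set ℝ≥0) : Prop :=
  ∀ x ∈ eigencone A lam ∩ box X,
    ∀ y ∈ box X, mulVec A y = (fun i => lam * x i) → y = x

/-!
Take x_j = γ*_j(A,b) for j ∈ N', x_i = α and x_j = 0 otherwise. Every column is scaled by at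
most its γ*, so A ⊗ x ≤ b; and each row r ∈ supp b lies in some M_j with j ∈ N', where the
j-th term a_{rj} γ*_j already equals b_r. Since i ∉ N', setting x_i = α does not disturb this.
-/

section Gamma

variable {m n : ℕ} (A : Matrix (Fin m) (Fin n) ℝ≥0) (b : Fin m → ℝ≥0) (j : Fin n)

theorem gammaStar_mul_le (r : Fin m) : gammaStar A b j * (A r j : ℝ≥0∞) ≤ b r := by
  rw [gammaStar, ENNReal.sSup_mul]
  exact iSup₂_le fun α hα => hα r

theorem mul_le_of_le_gammaStar {α : ℝ≥0} (hα : (α : ℝ≥0∞) ≤ gammaStar A b j) (r : Fin m) :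
    A r j * α ≤ b r := by
  have : (α : ℝ≥0∞) * A r j ≤ b r := (mul_le_mul_left hα _).trans (gammaStar_mul_le A b j r)
  rw [mul_comm] at this
  exact_mod_cast this

variable {A b j}

theorem gammaStar_ne_top_of_mem_Mset {r : Fin m} (hr : r ∈ Mset A b j) :
    gammaStar A b j ≠ ⊤ := by
  obtain ⟨heq, hb⟩ := hr
  intro htop
  have hA : (A r j : ℝ≥0∞) ≠ 0 := by
    rintro hA
    rw [hA, zero_mul] at heq
    exact hb (by exact_mod_cast heq.symm)
  rw [htop, ENNReal.mul_top hA] at heq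
  exact ENNReal.coe_ne_top heq.symm

theorem mul_toNNReal_gammaStar_of_mem_Mset {r : Fin m} (hr : r ∈ Mset A b j) :
    A r j * (gammaStar A b j).toNNReal = b r := by
  have : ((A r j * (gammaStar A b j).toNNReal : ℝ≥0) : ℝ≥0∞) = b r := by
    rw [ENNReal.coe_mul, ENNReal.coe_toNNReal (gammaStar_ne_top_of_mem_Mset hr)]
    exact hr.1
  exact_mod_cast this

end Gamma

theorem mulVec_eq_of_le_of_exists_eq {m n : ℕ} {A : Matrix (Fin m) (Fin n) ℝ≥0}
    {b : Fin m → ℝ≥0} {x : Fin n → ℝ≥0} (hle : ∀ r j, A r j * x j ≤ b r)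
    (hattained : ∀ r, b r ≠ 0 → ∃ j, A r j * x j = b r) : mulVec A x = b := by
  funext r
  refine le_antisymm (Finset.sup_le fun j _ => hle r j) ?_
  by_cases hb : b r = 0
  · simp [hb]
  · obtain ⟨j, hj⟩ := hattained r hb
    exact hj ▸ Finset.le_sup (f := fun j => A r j * x j) (Finset.mem_univ j)

theorem stmt5_general {m n : ℕ} (A : Matrix (Fin m) (Fin n) ℝ≥0) (b : Fin m → ℝ≥0)
    (N' : Set (Fin n))
    (hcover : (⋃ j ∈ N', Mset A b j) = supp b)
    (i : Fin n) (hi : i ∉ N') :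
    ∀ α : ℝ≥0, (α : ℝ≥0∞) ≤ gammaStar A b i →
      ∃ x : Fin n → ℝ≥0, mulVec A x = b ∧ x i = α := by
  classical
  intro α hα
  set x : Fin n → ℝ≥0 := Function.update
    (fun j => if j ∈ N' then (gammaStar A b j).toNNReal else 0) i α
  have hx_le : ∀ j, (x j : ℝ≥0∞) ≤ gammaStar A b j := by
    intro j
    rcases eq_or_ne j i with rfl | hji
    · simpa [x] using hα
    · by_cases hj : j ∈ N'
      · simpa [x, hji, hj] using ENNReal.coe_toNNReal_le_self
      · simp [x, hji, hj]
  refine ⟨x, mulVec_eq_of_le_of_exists_eq (fun r j => mul_le_of_le_gammaStar A b j (hx_le j) r)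
    fun r hb => ?_, by simp [x]⟩
  have hr : r ∈ ⋃ j ∈ N', Mset A b j := hcover ▸ hb
  obtain ⟨j, hjN, hrj⟩ := Set.mem_iUnion₂.mp hr
  have hji : j ≠ i := by rintro rfl; exact hi hjN
  exact ⟨j, by simpa [x, hji, hjN] using mul_toNNReal_gammaStar_of_mem_Mset hrj⟩

/-- given a proper covering subset N' and i ∉ N', any value
α ≤ γ*_i(A,b) is attained as the i-th coordinate of a solution. -/
theorem stmt5 {m n : ℕ} (A : Matrix (Fin m) (Fin n) ℝ≥0) (b : Fin m → ℝ≥0)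
    (N' : Set (Fin n)) (hproper : N' ≠ Set.univ)
    (hcover : (⋃ j ∈ N', Mset A b j) = supp b)
    (i : Fin n) (hi : i ∉ N') :
    ∀ α : ℝ≥0, (α : ℝ≥0∞) ≤ gammaStar A b i →
      ∃ x : Fin n → ℝ≥0, mulVec A x = b ∧ x i = α :=
  stmt5_general A b N' hcover i hi

end MaxAlg

end
end

section
/- Let A be an m×n matrix over ℝ≥0 and let b ∈ ℝ≥0^m be such that the system A⊗x = b has at least one solution x ∈ ℝ≥0^n. Then the solution is unique (i.e. there is exactly one x ∈ ℝ≥0^n with A⊗x = b) if and only if there is no index i with γ*_i(A,b) ≠ 0 such that b ∈ span(A^{(i)}). -/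
open scoped NNReal ENNReal

noncomputable section

namespace MaxAlg

/-!
The values `v` with `A i j * v ≤ b i` for all `i` are exactly those below `γ*_j(A,b)`.
If `b = A^{(i)} ⊗ c`, then replacing `c i` by any such value for column `i` still solves
`A ⊗ x = b`; when `γ*_i ≠ 0` both `0` and some positive value qualify, giving two solutions.
Conversely, if two solutions satisfy `x i < y i`, then `A r i * x i < A r i * y i ≤ b r` whenever
`A r i ≠ 0`, so every `b r` is attained off column `i` and `x` itself exhibits
`b ∈ span(A^{(i)})`, while `0 < y i ≤ γ*_i`.
-/

section Solutions

variable {m n : ℕ} {A : Matrix (Fin m) (Fin n) ℝ≥0} {b : Fin m → ℝ≥0}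

lemma mul_le_of_mulVec_eq {x : Fin n → ℝ≥0} (hx : mulVec A x = b) (r : Fin m) (j : Fin n) :
    A r j * x j ≤ b r :=
  hx ▸ Finset.le_sup (f := fun j => A r j * x j) (Finset.mem_univ j)

lemma mulVec_apply_eq_sup_erase (x : Fin n → ℝ≥0) (r : Fin m) (i : Fin n) :
    mulVec A x r = A r i * x i ⊔ (Finset.univ.erase i).sup fun j => A r j * x j := by
  rw [← Finset.sup_insert (f := fun j => A r j * x j), Finset.insert_erase (Finset.mem_univ i)]
  rfl

lemma le_gammaStar_iff {j : Fin n} {v : ℝ≥0} :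
    (v : ℝ≥0∞) ≤ gammaStar A b j ↔ ∀ i, A i j * v ≤ b i := by
  constructor
  · intro hv i
    have hγ : gammaStar A b j * A i j ≤ b i := by
      rw [gammaStar, ENNReal.sSup_mul]
      exact iSup₂_le fun α hα => hα i
    have : (v : ℝ≥0∞) * A i j ≤ b i := (mul_le_mul_left hv _).trans hγ
    rw [mul_comm]
    exact_mod_cast this
  · intro hv
    refine le_sSup fun i => ?_
    rw [mul_comm]
    exact_mod_cast hv i

lemma gammaStar_ne_zero_iff {j : Fin n} :
    gammaStar A b j ≠ 0 ↔ ∃ v : ℝ≥0, 0 < v ∧ ∀ i, A i j * v ≤ b i := by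
  constructor
  · intro hγ
    obtain ⟨v, hv, hvγ⟩ := ENNReal.lt_iff_exists_nnreal_btwn.1 (pos_iff_ne_zero.2 hγ)
    exact ⟨v, by exact_mod_cast hv, le_gammaStar_iff.1 hvγ.le⟩
  · rintro ⟨v, hv, hvb⟩ hγ
    have := le_gammaStar_iff.2 hvb
    rw [hγ, nonpos_iff_eq_zero, ENNReal.coe_eq_zero] at this
    exact hv.ne' this

lemma mulVec_update_eq_of_sup_erase_eq {i : Fin n} {c : Fin n → ℝ≥0}
    (hc : ∀ r, b r = (Finset.univ.erase i).sup fun j => A r j * c j) {v : ℝ≥0}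
    (hv : ∀ r, A r i * v ≤ b r) : mulVec A (Function.update c i v) = b := by
  funext r
  have hrest : ((Finset.univ.erase i).sup fun j => A r j * Function.update c i v j) = b r := by
    rw [hc r]
    refine Finset.sup_congr rfl fun j hj => ?_
    rw [Function.update_of_ne (Finset.ne_of_mem_erase hj)]
  rw [mulVec_apply_eq_sup_erase _ r i, hrest, Function.update_self]
  exact sup_eq_right.2 (hv r)

lemma mem_spanMinus_of_lt {x : Fin n → ℝ≥0} (hx : mulVec A x = b) {i : Fin n} {w : ℝ≥0}
    (hw : ∀ r, A r i * w ≤ b r) (hlt : x i < w) : b ∈ spanMinus A i := by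
  refine ⟨x, fun r => ?_⟩
  have hb := mulVec_apply_eq_sup_erase (A := A) x r i
  rw [hx] at hb
  rw [hb]
  refine sup_eq_right.2 ?_
  rcases eq_or_ne (A r i) 0 with h0 | h0
  · simp [h0]
  · have hlt' : A r i * x i < A r i * w := mul_lt_mul_of_pos_left hlt (pos_iff_ne_zero.2 h0)
    have : A r i * x i < A r i * x i ⊔ _ := hb ▸ hlt'.trans_le (hw r)
    exact (lt_sup_iff.1 this).resolve_left (lt_irrefl _) |>.le

lemma gammaStar_ne_zero_and_mem_spanMinus_of_lt {x y : Fin n → ℝ≥0} (hx : mulVec A x = b)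
    (hy : mulVec A y = b) {i : Fin n} (hlt : x i < y i) :
    gammaStar A b i ≠ 0 ∧ b ∈ spanMinus A i :=
  ⟨gammaStar_ne_zero_iff.2 ⟨y i, pos_of_gt hlt, fun r => mul_le_of_mulVec_eq hy r i⟩,
    mem_spanMinus_of_lt hx (fun r => mul_le_of_mulVec_eq hy r i) hlt⟩

end Solutions

/-- criterion for uniqueness of the solution of A⊗x = b. -/
theorem stmt8 {m n : ℕ} (A : Matrix (Fin m) (Fin n) ℝ≥0) (b : Fin m → ℝ≥0)
    (hex : ∃ x : Fin n → ℝ≥0, mulVec A x = b) :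
    (∃! x : Fin n → ℝ≥0, mulVec A x = b) ↔
      ¬ ∃ i : Fin n, gammaStar A b i ≠ 0 ∧ b ∈ spanMinus A i := by
  constructor
  · rintro ⟨x, -, huniq⟩ ⟨i, hγ, c, hc⟩
    obtain ⟨v, hv, hvb⟩ := gammaStar_ne_zero_iff.1 hγ
    have hzero := huniq _ (mulVec_update_eq_of_sup_erase_eq hc (v := 0) fun r => by simp)
    have hpos := huniq _ (mulVec_update_eq_of_sup_erase_eq hc hvb)
    have := congrFun (hpos.trans hzero.symm) i
    simp only [Function.update_self] at this
    exact hv.ne' this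
  · intro hno
    obtain ⟨x, hx⟩ := hex
    refine ⟨x, hx, fun y hy => ?_⟩
    by_contra hne
    obtain ⟨i, hi⟩ := Function.ne_iff.1 hne
    rcases hi.lt_or_gt with hlt | hlt
    · exact hno ⟨i, gammaStar_ne_zero_and_mem_spanMinus_of_lt hy hx hlt⟩
    · exact hno ⟨i, gammaStar_ne_zero_and_mem_spanMinus_of_lt hx hy hlt⟩

end MaxAlg

end
end

section
/- Let A be an n×n matrix over ℝ≥0 and λ > 0. Then V(A,λ) contains a nonzero simple image eigenvector associated with λ if and only if there exists a nonempty subset N' ⊆ {1,…,n} with the following four properties: (i) there exists x ∈ ℝ≥0^n with A⊗x = λ·x and supp(x) = N'; (ii) for every i ∉ N' there exists l ∉ N' with a_{li} ≠ 0; (iii) for every i ∈ N' there is a cycle lying in N' passing through i whose weight equals λ raised to its length; (iv) for every i ∈ N' there is exactly one index j such that the pair (i,j) occurs as a pair of consecutive values on some cycle lying in N' whose weight equals λ raised to its length (i.e., every node of the critical graph crit(A,x,λ) has a unique outgoing critical edge, so that all strongly connected components of crit(A,x,λ) are cycles). -/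
open scoped NNReal ENNReal

noncomputable section

namespace MaxAlg

/-!
By the max-algebraic simple-image criterion, `x` is the only solution of `A ⊗ y = A ⊗ x` iff every
column outside `supp x` meets a zero row of `A ⊗ x` and every column in `supp x` is the unique
tight column of some nonzero row. For an eigenvector this makes the tight-successor relation on
`supp x` a permutation, whose cycles are exactly the critical cycles; this gives (ii)–(iv).

Conversely, the critical edges of an eigenvector `x` are the tight edges that lie on tight cycles.
Rescaling `x i` by `r ^ ρ i`, where `ρ i` counts the nodes that reach `i` by a tight path but are
not reachable from `i`, and `r < 1` is close enough to `1`, keeps the critical edges tight and makes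
every other edge strictly slack. For the rescaled vector, (ii) and (iv) are then exactly the
simple-image criterion.
-/

open Finset Relation Topology

section Preimage

variable {m n : ℕ} {A : Matrix (Fin m) (Fin n) ℝ≥0}

lemma le_mulVec (A : Matrix (Fin m) (Fin n) ℝ≥0) (x : Fin n → ℝ≥0) (i : Fin m) (j : Fin n) :
    A i j * x j ≤ mulVec A x i :=
  le_sup (f := fun j => A i j * x j) (mem_univ j)

lemma mulVec_le_iff {x : Fin n → ℝ≥0} {i : Fin m} {c : ℝ≥0} :
    mulVec A x i ≤ c ↔ ∀ j, A i j * x j ≤ c := by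
  simp [mulVec, Finset.sup_le_iff]

lemma mulVec_mono {x y : Fin n → ℝ≥0} (h : x ≤ y) : mulVec A x ≤ mulVec A y := fun _ =>
  sup_mono_fun fun j _ => mul_le_mul_right (h j) _

lemma exists_mulVec_eq {x : Fin n → ℝ≥0} {i : Fin m} (h : mulVec A x i ≠ 0) :
    ∃ j, A i j * x j = mulVec A x i := by
  have : Nonempty (Fin n) := by
    by_contra hempty
    simp [mulVec, not_nonempty_iff.1 hempty] at h
  obtain ⟨j, -, hj⟩ := exists_mem_eq_sup univ univ_nonempty fun j => A i j * x j
  exact ⟨j, hj.symm⟩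

lemma exists_zero_row_of_unique {x : Fin n → ℝ≥0}
    (hu : ∀ y, mulVec A y = mulVec A x → y = x) {j : Fin n} (hj : x j = 0) :
    ∃ i, mulVec A x i = 0 ∧ A i j ≠ 0 := by
  by_contra! h
  have hsmall : ∀ i, ∀ᶠ ε in 𝓝[>] (0 : ℝ≥0), A i j * ε ≤ mulVec A x i := fun i => by
    by_cases hA : A i j = 0
    · simp [hA]
    have hlim : Filter.Tendsto (fun ε => A i j * ε) (𝓝[>] 0) (𝓝 (A i j * 0)) :=
      ((continuous_const_mul _).tendsto 0).mono_left nhdsWithin_le_nhds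
    rw [mul_zero] at hlim
    exact (hlim.eventually_lt tendsto_const_nhds
      (pos_iff_ne_zero.2 fun h0 => hA (h i h0))).mono fun _ => le_of_lt
  obtain ⟨ε, hε, hεpos⟩ :=
    ((Filter.eventually_all.2 hsmall).and self_mem_nhdsWithin).exists
  have hy : mulVec A (Function.update x j ε) = mulVec A x := by
    refine le_antisymm (fun i => mulVec_le_iff.2 fun j' => ?_) (mulVec_mono fun j' => ?_)
    · rcases eq_or_ne j' j with rfl | hj'
      · simpa using hε i
      · simpa [hj'] using le_mulVec A x i j'
    · rcases eq_or_ne j' j with rfl | hj'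
      · simp [hj]
      · simp [hj']
  have := congrFun (hu _ hy) j
  simp only [Function.update_self] at this
  exact (ne_of_gt hεpos) (this.trans hj)

lemma exists_unique_tight_of_unique {x : Fin n → ℝ≥0}
    (hu : ∀ y, mulVec A y = mulVec A x → y = x) {j : Fin n} (hj : x j ≠ 0) :
    ∃ i, mulVec A x i ≠ 0 ∧ ∀ j', A i j' * x j' = mulVec A x i ↔ j' = j := by
  by_contra! h
  have hother : ∀ i, mulVec A x i ≠ 0 → ∃ j' ≠ j, A i j' * x j' = mulVec A x i := by
    intro i hi
    obtain ⟨j', hj' | hj'⟩ := h i hi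
    · exact ⟨j', hj'.2, hj'.1⟩
    · obtain ⟨j₀, hj₀⟩ := exists_mulVec_eq hi
      exact ⟨j₀, fun h₀ => hj'.1 (hj'.2 ▸ h₀ ▸ hj₀), hj₀⟩
  have hy : mulVec A (Function.update x j 0) = mulVec A x := by
    refine le_antisymm (mulVec_mono fun j' => ?_) (fun i => ?_)
    · rcases eq_or_ne j' j with rfl | hj'
      · simp
      · simp [hj']
    · by_cases hi : mulVec A x i = 0
      · simp [hi]
      obtain ⟨j', hj', htight⟩ := hother i hi
      calc mulVec A x i = A i j' * Function.update x j 0 j' := by simp [hj', htight]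
        _ ≤ _ := le_mulVec A _ i j'
  exact hj (by simpa using (congrFun (hu _ hy) j).symm)

lemma eq_of_mulVec_eq {x y : Fin n → ℝ≥0}
    (hzero : ∀ j, x j = 0 → ∃ i, mulVec A x i = 0 ∧ A i j ≠ 0)
    (htight : ∀ j, x j ≠ 0 → ∃ i, mulVec A x i ≠ 0 ∧ ∀ j', A i j' * x j' = mulVec A x i ↔ j' = j)
    (hy : mulVec A y = mulVec A x) : y = x := by
  have hy_zero : ∀ j, x j = 0 → y j = 0 := fun j hj => by
    obtain ⟨i, hi, hA⟩ := hzero j hj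
    have := le_mulVec A y i j
    rw [hy, hi, nonpos_iff_eq_zero, mul_eq_zero] at this
    exact this.resolve_left hA
  have hy_le : ∀ j, y j ≤ x j := fun j => by
    by_cases hj : x j = 0
    · simp [hy_zero j hj, hj]
    obtain ⟨i, hi, hiff⟩ := htight j hj
    have hA : A i j ≠ 0 := fun h0 => hi (by simpa [h0] using ((hiff j).2 rfl).symm)
    refine le_of_mul_le_mul_left ?_ (pos_iff_ne_zero.2 hA)
    calc A i j * y j ≤ mulVec A y i := le_mulVec A y i j
      _ = A i j * x j := by rw [hy, (hiff j).2 rfl]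
  funext j
  by_cases hj : x j = 0
  · rw [hy_zero j hj, hj]
  obtain ⟨i, hi, hiff⟩ := htight j hj
  obtain ⟨j₀, hj₀⟩ := exists_mulVec_eq (hy ▸ hi : mulVec A y i ≠ 0)
  have hx_tight : A i j₀ * x j₀ = mulVec A x i := le_antisymm (le_mulVec A x i j₀)
    (hy ▸ hj₀ ▸ mul_le_mul_right (hy_le j₀) _)
  obtain rfl := (hiff j₀).1 hx_tight
  have hA : A i j₀ ≠ 0 := fun h0 => hi (by simpa [h0] using hx_tight.symm)
  exact mul_left_cancel₀ hA (hj₀.trans (hy.symm ▸ hx_tight.symm))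

theorem forall_mulVec_eq_imp_eq_iff (x : Fin n → ℝ≥0) :
    (∀ y, mulVec A y = mulVec A x → y = x) ↔
      (∀ j, x j = 0 → ∃ i, mulVec A x i = 0 ∧ A i j ≠ 0) ∧
      ∀ j, x j ≠ 0 → ∃ i, mulVec A x i ≠ 0 ∧ ∀ j', A i j' * x j' = mulVec A x i ↔ j' = j :=
  ⟨fun hu => ⟨fun _ => exists_zero_row_of_unique hu, fun _ => exists_unique_tight_of_unique hu⟩,
    fun h _ => eq_of_mulVec_eq h.1 h.2⟩

end Preimage

lemma _root_.NNReal.prod_eq_prod_iff_of_le {ι : Type*} {s : Finset ι} {f g : ι → ℝ≥0}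
    (hfg : ∀ i ∈ s, f i ≤ g i) (hg : ∀ i ∈ s, g i ≠ 0) :
    ∏ i ∈ s, f i = ∏ i ∈ s, g i ↔ ∀ i ∈ s, f i = g i := by
  refine ⟨fun h => ?_, prod_congr rfl⟩
  by_contra! hne
  obtain ⟨i, hi, hne⟩ := hne
  refine h.not_lt ?_
  by_cases hf : ∀ j ∈ s, 0 < f j
  · exact prod_lt_prod hf hfg ⟨i, hi, (hfg i hi).lt_of_ne hne⟩
  obtain ⟨j, hj, hj0⟩ := not_forall₂.1 hf
  rw [prod_eq_zero hj (nonpos_iff_eq_zero.1 (not_lt.1 hj0))]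
  exact prod_pos fun j hj => pos_iff_ne_zero.2 (hg j hj)

lemma IsCycle.prod_range_succ {n k : ℕ} {σ : ℕ → Fin n} {M : Type*} [CommMonoid M]
    (hc : IsCycle k σ) (f : Fin n → M) :
    ∏ t ∈ range k, f (σ (t + 1)) = ∏ t ∈ range k, f (σ t) := by
  obtain ⟨k, rfl⟩ := Nat.exists_eq_add_of_le' hc.1
  rw [Finset.prod_range_succ, prod_range_succ' (fun t => f (σ t)), hc.2]

section Relation

variable {α : Type*} {r : α → α → Prop} {a b : α}

lemma reflTransGen_of_chain {k : ℕ} {σ : ℕ → α} (h : ∀ t < k, r (σ t) (σ (t + 1)))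
    {s t : ℕ} (hst : s ≤ t) (htk : t ≤ k) : ReflTransGen r (σ s) (σ t) := by
  induction t, hst using Nat.le_induction with
  | base => exact .refl
  | succ t _ ih => exact (ih (by omega)).tail (h t (by omega))

lemma exists_chain_of_reflTransGen (h : ReflTransGen r a b) :
    ∃ (k : ℕ) (σ : ℕ → α), σ 0 = a ∧ σ k = b ∧ ∀ t < k, r (σ t) (σ (t + 1)) := by
  induction h using ReflTransGen.head_induction_on with
  | refl => exact ⟨0, fun _ => b, rfl, rfl, by simp⟩
  | @head a c hac _ ih =>
    obtain ⟨k, σ, h0, hk, hσ⟩ := ih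
    refine ⟨k + 1, fun t => Nat.casesOn t a σ, rfl, hk, fun t ht => ?_⟩
    cases t with
    | zero => exact show r a (σ 0) from h0 ▸ hac
    | succ t => exact hσ t (by omega)

lemma exists_rel_reflTransGen_of_rel_reflTransGen (hab : r a b) (hba : ReflTransGen r b a) :
    ∃ c, r c a ∧ ReflTransGen r a c := by
  rcases hba.cases_tail with rfl | ⟨c, hbc, hca⟩
  · exact ⟨a, hab, .refl⟩
  · exact ⟨c, hca, .head hab hbc⟩

variable [Fintype α]

open Classical in
def reachRank (r : α → α → Prop) (a : α) : ℕ :=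
  #{c | ReflTransGen r c a ∧ ¬ ReflTransGen r a c}

lemma reachRank_eq_of_reflTransGen (hab : ReflTransGen r a b) (hba : ReflTransGen r b a) :
    reachRank r a = reachRank r b := by
  unfold reachRank
  congr 1
  ext c
  simp only [mem_filter, mem_univ, true_and]
  exact and_congr ⟨fun h => h.trans hab, fun h => h.trans hba⟩
    (not_congr ⟨hba.trans, hab.trans⟩)

lemma reachRank_lt (hab : r a b) (hba : ¬ ReflTransGen r b a) :
    reachRank r a < reachRank r b := by
  unfold reachRank
  refine card_lt_card ((ssubset_iff_of_subset fun c hc => ?_).2 ⟨a, ?_, ?_⟩)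
  · simp only [mem_filter, mem_univ, true_and] at hc ⊢
    exact ⟨hc.1.tail hab, fun hbc => hc.2 (.head hab hbc)⟩
  · simpa using ⟨.single hab, hba⟩
  · simp

end Relation

lemma _root_.NNReal.exists_lt_one_forall_mul_pow_lt {ι : Type*} [Finite ι] {u v : ι → ℝ≥0}
    (huv : ∀ i, u i < v i) (p q : ι → ℕ) :
    ∃ r : ℝ≥0, 0 < r ∧ r < 1 ∧ ∀ i, u i * r ^ p i < v i * r ^ q i := by
  have hlim (w : ℝ≥0) (e : ℕ) : Filter.Tendsto (fun r : ℝ≥0 => w * r ^ e) (𝓝[<] 1) (𝓝 w) :=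
    ((show Continuous fun r : ℝ≥0 => w * r ^ e by fun_prop).tendsto' 1 w (by simp)).mono_left
      nhdsWithin_le_nhds
  have hev (i : ι) : ∀ᶠ r in 𝓝[<] (1 : ℝ≥0), u i * r ^ p i < v i * r ^ q i :=
    (hlim _ _).eventually_lt (hlim _ _) (huv i)
  have : (𝓝[<] (1 : ℝ≥0)).NeBot := nhdsLT_neBot_of_exists_lt ⟨0, zero_lt_one⟩
  obtain ⟨r, hr, hr01⟩ := ((Filter.eventually_all.2 hev).and (Ioo_mem_nhdsLT zero_lt_one)).exists
  exact ⟨r, hr01.1, hr01.2, hr⟩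

section Eigenvector

variable {n : ℕ} {A : Matrix (Fin n) (Fin n) ℝ≥0} {lam : ℝ≥0} {x : Fin n → ℝ≥0}

variable (A lam x) in
def IsTight (i j : Fin n) : Prop := x i ≠ 0 ∧ A i j * x j = lam * x i

lemma cycleWeight_eq_pow_iff (hx : mulVec A x = fun i => lam * x i) (hlam : lam ≠ 0)
    {k : ℕ} {σ : ℕ → Fin n} (hc : IsCycle k σ) (hσ : LiesIn k σ (supp x)) :
    cycleWeight A k σ = lam ^ k ↔ ∀ t < k, IsTight A lam x (σ t) (σ (t + 1)) := by
  have hprod : ∏ t ∈ range k, x (σ t) ≠ 0 :=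
    prod_ne_zero_iff.2 fun t ht => hσ t (mem_range.1 ht)
  have hweight : cycleWeight A k σ * ∏ t ∈ range k, x (σ t) =
      ∏ t ∈ range k, A (σ t) (σ (t + 1)) * x (σ (t + 1)) := by
    rw [cycleWeight, ← hc.prod_range_succ x, prod_mul_distrib]
  have hpow : lam ^ k * ∏ t ∈ range k, x (σ t) = ∏ t ∈ range k, lam * x (σ t) := by
    rw [prod_mul_distrib, prod_const, card_range]
  rw [← mul_left_inj' hprod, hweight, hpow, NNReal.prod_eq_prod_iff_of_le]
  · simp only [mem_range, IsTight]
    exact forall₂_congr fun t ht => (and_iff_right (hσ t ht)).symm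
  · exact fun t _ => (le_mulVec A x (σ t) (σ (t + 1))).trans_eq (congrFun hx _)
  · exact fun t ht => mul_ne_zero hlam (hσ t (mem_range.1 ht))

lemma critEdgeOn_iff (hx : mulVec A x = fun i => lam * x i) (hlam : lam ≠ 0) {i j : Fin n} :
    CritEdgeOn A lam x i j ↔ IsTight A lam x i j ∧ ReflTransGen (IsTight A lam x) j i := by
  constructor
  · rintro ⟨k, σ, hc, hσ, hw, t, ht, rfl, rfl⟩
    have htight := (cycleWeight_eq_pow_iff hx hlam hc hσ).1 hw
    refine ⟨htight t ht, ?_⟩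
    have hback := reflTransGen_of_chain htight (Nat.zero_le t) ht.le
    rw [← hc.2] at hback
    exact (reflTransGen_of_chain htight ht le_rfl).trans hback
  · rintro ⟨hij, hji⟩
    obtain ⟨k, σ, h0, hk, hσ⟩ := exists_chain_of_reflTransGen hji
    let τ : ℕ → Fin n := fun t => Nat.casesOn t i σ
    have hτ : ∀ t < k + 1, IsTight A lam x (τ t) (τ (t + 1)) := fun t ht => by
      cases t with
      | zero => exact show IsTight A lam x i (σ 0) from h0 ▸ hij
      | succ t => exact hσ t (by omega)
    have hc : IsCycle (k + 1) τ := ⟨by omega, hk⟩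
    have hτS : LiesIn (k + 1) τ (supp x) := fun t ht => (hτ t ht).1
    exact ⟨k + 1, τ, hc, hτS, (cycleWeight_eq_pow_iff hx hlam hc hτS).2 hτ, 0, by omega, rfl, h0⟩

lemma exists_critEdgeOn_into (hx : mulVec A x = fun i => lam * x i) (hlam : lam ≠ 0)
    {i j : Fin n} (h : CritEdgeOn A lam x i j) : ∃ q, CritEdgeOn A lam x q i := by
  obtain ⟨htight, hback⟩ := (critEdgeOn_iff hx hlam).1 h
  obtain ⟨q, hqi, hiq⟩ := exists_rel_reflTransGen_of_rel_reflTransGen htight hback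
  exact ⟨q, (critEdgeOn_iff hx hlam).2 ⟨hqi, hiq⟩⟩

lemma SimpleImageEig.forall_mulVec_eq_imp_eq (h : SimpleImageEig A lam x) :
    ∀ y, mulVec A y = mulVec A x → y = x :=
  fun y hy => h.2 y (hy.trans h.1)

lemma SimpleImageEig.exists_zero_row (h : SimpleImageEig A lam x) (hlam : lam ≠ 0) {j : Fin n}
    (hj : x j = 0) : ∃ l, x l = 0 ∧ A l j ≠ 0 := by
  have hx : mulVec A x = fun i => lam * x i := h.1
  obtain ⟨l, hl, hA⟩ := ((forall_mulVec_eq_imp_eq_iff x).1 h.forall_mulVec_eq_imp_eq).1 j hj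
  simp only [hx, mul_eq_zero, hlam, false_or] at hl
  exact ⟨l, hl, hA⟩

lemma SimpleImageEig.exists_isTight_iff (h : SimpleImageEig A lam x) {j : Fin n} (hj : x j ≠ 0) :
    ∃ l, x l ≠ 0 ∧ ∀ j', IsTight A lam x l j' ↔ j' = j := by
  have hx : mulVec A x = fun i => lam * x i := h.1
  obtain ⟨l, hl, hiff⟩ := ((forall_mulVec_eq_imp_eq_iff x).1 h.forall_mulVec_eq_imp_eq).2 j hj
  simp only [hx] at hl hiff
  have hxl : x l ≠ 0 := right_ne_zero_of_mul hl
  exact ⟨l, hxl, fun j' => (and_iff_right hxl).trans (hiff j')⟩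

lemma SimpleImageEig.existsUnique_critEdgeOn (h : SimpleImageEig A lam x) (hlam : lam ≠ 0)
    {i : Fin n} (hi : x i ≠ 0) : ∃! j, CritEdgeOn A lam x i j := by
  choose pred hpred using fun j : {j // x j ≠ 0} => h.exists_isTight_iff j.2
  let p : {j // x j ≠ 0} → {j // x j ≠ 0} := fun j => ⟨pred j, (hpred j).1⟩
  have hp_tight : ∀ j, IsTight A lam x (p j) j := fun j => ((hpred j).2 j).2 rfl
  have hp_inj : p.Injective := fun a b hab =>
    Subtype.ext (((hpred b).2 a).1 (show IsTight A lam x (p b) a from hab ▸ hp_tight a))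
  have hpath : ∀ m b, ReflTransGen (IsTight A lam x) (p^[m] b) b := by
    intro m
    induction m with
    | zero => exact fun _ => .refl
    | succ m ih => exact fun b => Function.iterate_succ_apply' p m b ▸ .head (hp_tight _) (ih b)
  obtain ⟨j, hj⟩ := (Finite.injective_iff_surjective.1 hp_inj) ⟨i, hi⟩
  obtain rfl : pred j = i := congrArg Subtype.val hj
  obtain ⟨k, hk, hper⟩ := Function.mem_periodicPts.1 (hp_inj.mem_periodicPts j)
  have hreturn : p^[k - 1] (p j) = j := by
    rw [← Function.iterate_succ_apply, Nat.succ_eq_add_one, Nat.sub_add_cancel hk]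
    exact hper
  have hcrit : CritEdgeOn A lam x (pred j) j :=
    (critEdgeOn_iff h.1 hlam).2 ⟨hp_tight j, by simpa only [hreturn] using hpath (k - 1) (p j)⟩
  exact ⟨j, hcrit, fun j' hj' => ((hpred j).2 j').1 ((critEdgeOn_iff h.1 hlam).1 hj').1⟩

theorem exists_rescale_isTight_iff_critEdgeOn (hx : mulVec A x = fun i => lam * x i)
    (hlam : lam ≠ 0) :
    ∃ x' : Fin n → ℝ≥0, (∀ i, x' i = 0 ↔ x i = 0) ∧ (∀ l j, A l j * x' j ≤ lam * x' l) ∧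
      ∀ l j, x l ≠ 0 → (A l j * x' j = lam * x' l ↔ CritEdgeOn A lam x l j) := by
  let ρ := reachRank (IsTight A lam x)
  have hle (l j : Fin n) : A l j * x j ≤ lam * x l := (le_mulVec A x l j).trans_eq (congrFun hx l)
  obtain ⟨r, hr0, hr1, hr⟩ := NNReal.exists_lt_one_forall_mul_pow_lt
    (ι := {e : Fin n × Fin n // A e.1 e.2 * x e.2 < lam * x e.1}) (fun e => e.2)
    (fun e => ρ e.1.2) (fun e => ρ e.1.1)
  have hcrit (l j : Fin n) (hlj : CritEdgeOn A lam x l j) :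
      A l j * (x j * r ^ ρ j) = lam * (x l * r ^ ρ l) := by
    obtain ⟨htight, hback⟩ := (critEdgeOn_iff hx hlam).1 hlj
    have hρ : ρ l = ρ j := reachRank_eq_of_reflTransGen (.single htight) hback
    rw [hρ, ← mul_assoc, htight.2, mul_assoc]
  have hslack (l j : Fin n) (hl : x l ≠ 0) (hlj : ¬ CritEdgeOn A lam x l j) :
      A l j * (x j * r ^ ρ j) < lam * (x l * r ^ ρ l) := by
    rw [← mul_assoc, ← mul_assoc]
    rcases (hle l j).lt_or_eq with hlt | htight
    · exact hr ⟨(l, j), hlt⟩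
    have hback : ¬ ReflTransGen (IsTight A lam x) j l :=
      fun h => hlj ((critEdgeOn_iff hx hlam).2 ⟨⟨hl, htight⟩, h⟩)
    rw [htight]
    exact mul_lt_mul_of_pos_left (pow_lt_pow_right_of_lt_one₀ hr0 hr1
      (reachRank_lt ⟨hl, htight⟩ hback)) (pos_iff_ne_zero.2 (mul_ne_zero hlam hl))
  refine ⟨fun i => x i * r ^ ρ i, fun i => by simp [hr0.ne'], fun l j => ?_,
    fun l j hl => ⟨fun h => by_contra fun hlj => (hslack l j hl hlj).ne h, hcrit l j⟩⟩
  by_cases hl : x l = 0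
  · have : A l j * x j = 0 := by simpa [hl] using hle l j
    simp [← mul_assoc, this]
  by_cases hlj : CritEdgeOn A lam x l j
  · exact (hcrit l j hlj).le
  · exact (hslack l j hl hlj).le

theorem exists_simpleImageEig_of_existsUnique_critEdgeOn
    (hx : mulVec A x = fun i => lam * x i) (hlam : lam ≠ 0)
    (hzero : ∀ i, x i = 0 → ∃ l, x l = 0 ∧ A l i ≠ 0)
    (hcrit : ∀ i, x i ≠ 0 → ∃! j, CritEdgeOn A lam x i j) :
    ∃ x', (∀ i, x' i = 0 ↔ x i = 0) ∧ SimpleImageEig A lam x' := by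
  obtain ⟨x', hx'0, hle, hiff⟩ := exists_rescale_isTight_iff_critEdgeOn hx hlam
  have hx' : mulVec A x' = fun l => lam * x' l := by
    funext l
    refine le_antisymm (mulVec_le_iff.2 (hle l)) ?_
    by_cases hl : x l = 0
    · simp [(hx'0 l).2 hl]
    obtain ⟨j, hj, -⟩ := hcrit l hl
    exact ((hiff l j hl).2 hj).ge.trans (le_mulVec A x' l j)
  refine ⟨x', hx'0, hx', fun y hy =>
    (forall_mulVec_eq_imp_eq_iff x').2 ⟨fun j hj => ?_, fun j hj => ?_⟩ y (hy.trans hx'.symm)⟩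
  · obtain ⟨l, hl, hA⟩ := hzero j ((hx'0 j).1 hj)
    exact ⟨l, by simp [hx', (hx'0 l).2 hl], hA⟩
  · have hxj : x j ≠ 0 := mt (hx'0 j).2 hj
    obtain ⟨j₁, hj₁, -⟩ := hcrit j hxj
    obtain ⟨q, hq⟩ := exists_critEdgeOn_into hx hlam hj₁
    have hxq : x q ≠ 0 := ((critEdgeOn_iff hx hlam).1 hq).1.1
    refine ⟨q, by simpa [hx'] using mul_ne_zero hlam (mt (hx'0 q).1 hxq), fun j' => ?_⟩
    rw [hx']
    exact (hiff q j' hxq).trans ⟨fun h => (hcrit q hxq).unique h hq, fun h => h ▸ hq⟩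

end Eigenvector

/-- existence of nonzero simple image eigenvectors in V(A,λ). -/
theorem stmt9 {n : ℕ} (A : Matrix (Fin n) (Fin n) ℝ≥0) (lam : ℝ≥0) (hlam : 0 < lam) :
    (∃ x : Fin n → ℝ≥0, x ≠ 0 ∧ SimpleImageEig A lam x) ↔
      ∃ N' : Set (Fin n), N'.Nonempty ∧
        (∃ x : Fin n → ℝ≥0, mulVec A x = (fun i => lam * x i) ∧ supp x = N') ∧
        (∀ i ∉ N', ∃ l ∉ N', A l i ≠ 0) ∧
        (∀ i ∈ N', ∃ (k : ℕ) (σ : ℕ → Fin n), IsCycle k σ ∧ LiesIn k σ N' ∧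
          cycleWeight A k σ = lam ^ k ∧ ∃ t < k, σ t = i) ∧
        (∀ i ∈ N', ∃! j : Fin n, ∃ (k : ℕ) (σ : ℕ → Fin n), IsCycle k σ ∧
          LiesIn k σ N' ∧ cycleWeight A k σ = lam ^ k ∧
          ∃ t < k, σ t = i ∧ σ (t + 1) = j) := by
  constructor
  · rintro ⟨x, hx0, hsimple⟩
    obtain ⟨i₀, hi₀⟩ := Function.ne_iff.1 hx0
    refine ⟨supp x, ⟨i₀, hi₀⟩, ⟨x, hsimple.1, rfl⟩, fun i hi => ?_, fun i hi => ?_,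
      fun i hi => hsimple.existsUnique_critEdgeOn hlam.ne' hi⟩
    · obtain ⟨l, hl, hA⟩ := hsimple.exists_zero_row hlam.ne' (not_not.1 hi)
      exact ⟨l, not_not.2 hl, hA⟩
    · obtain ⟨j, ⟨k, σ, hc, hσ, hw, t, ht, hti, -⟩, -⟩ :=
        hsimple.existsUnique_critEdgeOn hlam.ne' hi
      exact ⟨k, σ, hc, hσ, hw, t, ht, hti⟩
  · rintro ⟨N', ⟨i₀, hi₀⟩, ⟨x, hx, rfl⟩, hzero, -, hcrit⟩
    obtain ⟨x', hx'0, hsimple⟩ := exists_simpleImageEig_of_existsUnique_critEdgeOn hx hlam.ne'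
      (fun i hi => by simpa [supp] using hzero i (by simpa [supp] using hi)) hcrit
    exact ⟨x', fun h => hi₀ ((hx'0 i₀).1 (congrFun h i₀)), hsimple⟩

end MaxAlg

end
end

section
/- Let A be an n×n matrix over ℝ≥0, λ > 0, and let X ⊆ ℝ≥0^n be an interval, i.e. X = {x : x_j ∈ X_j for all j} where each X_j ⊆ ℝ≥0 is nonempty and order-convex. If A is weakly (X,λ)-robust, then A has X-simple image eigencone associated with λ, i.e. for every x ∈ V(A,λ) ∩ X and every y ∈ X with A⊗y = λ·x one has y = x. -/
open scoped NNReal ENNReal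

noncomputable section

namespace MaxAlg

theorem mulVec_const_mul {m n : ℕ} (A : Matrix (Fin m) (Fin n) ℝ≥0) (c : ℝ≥0)
    (x : Fin n → ℝ≥0) : mulVec A (fun j => c * x j) = fun i => c * mulVec A x i := by
  funext i
  simp only [mulVec, NNReal.mul_finset_sup]
  exact Finset.sup_congr rfl fun j _ => mul_left_comm _ _ _

theorem const_mul_mem_eigencone {n : ℕ} {A : Matrix (Fin n) (Fin n) ℝ≥0} {lam : ℝ≥0}
    {x : Fin n → ℝ≥0} (c : ℝ≥0) (hx : x ∈ eigencone A lam) :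
    (fun i => c * x i) ∈ eigencone A lam := by
  change mulVec A _ = _
  rw [mulVec_const_mul, hx]
  funext i
  exact mul_left_comm _ _ _

theorem stmt11_general {n : ℕ} (A : Matrix (Fin n) (Fin n) ℝ≥0) (lam : ℝ≥0) (hlam : 0 < lam)
    (X : Fin n → Set ℝ≥0)
    (hrob : ∀ x ∈ box X,
      (∃ t : ℕ, 1 ≤ t ∧ (mulVec A)^[t] x ∈ eigencone A lam) →
        x ∈ eigencone A lam) :
    XSimple A lam X := by
  rintro x ⟨hx, -⟩ y hy hAy
  have hy_eig : y ∈ eigencone A lam := by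
    refine hrob y hy ⟨1, le_rfl, ?_⟩
    rw [Function.iterate_one, hAy]
    exact const_mul_mem_eigencone lam hx
  funext i
  have hlam_y : lam * y i = lam * x i := by
    rw [← congrFun hy_eig i, hAy]
  exact mul_left_cancel₀ hlam.ne' hlam_y

/-- weak (X,λ)-robustness implies X-simple image eigencone. -/
theorem stmt11 {n : ℕ} (A : Matrix (Fin n) (Fin n) ℝ≥0) (lam : ℝ≥0) (hlam : 0 < lam)
    (X : Fin n → Set ℝ≥0) (hX : IsInterval X)
    (hrob : ∀ x ∈ box X,
      (∃ t : ℕ, 1 ≤ t ∧ (mulVec A)^[t] x ∈ eigencone A lam) →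
        x ∈ eigencone A lam) :
    XSimple A lam X :=
  stmt11_general A lam hlam X hrob

end MaxAlg

end
end

section
/- Let A be an n×n matrix over ℝ≥0, λ > 0, and let X ⊆ ℝ≥0^n be an interval, X = {x : x_j ∈ X_j for all j} with each X_j ⊆ ℝ≥0 nonempty and order-convex, which is x̲-open (inf X_j ∉ X_j for every j). Assume V(A,λ) ∩ X ≠ ∅ and that A has X-simple image eigencone associated with λ. Then: (a) every index i ∈ {1,…,n} is a critical node, i.e. N_c(A,λ) = {1,…,n}; and (b) for every index i there is exactly one index j such that the pair (i,j) occurs as a pair of consecutive values on some cycle lying in N^λ(A) whose weight equals λ raised to its length (i.e., the critical graph crit(A,λ) consists of disjoint cycles). -/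
/-! Take `x ∈ V(A,λ) ∩ X`. Since `X` is x̲-open, `x` is positive and each `x j` can be lowered
inside `X`. If every row attaining its maximum `λ x i` at column `j` attained it at another
column too, lowering `x j` would not change `A ⊗ x`, against simplicity. So each column `j` is
the only maximizer of some row `r j`; `r` is injective, hence a permutation, and its inverse `π`
picks the unique saturated entry of every row. The cycles of `π` are critical, and on a critical
cycle every edge is saturated, so `(i, π i)` is the only critical edge leaving `i`. -/

open scoped NNReal ENNReal

noncomputable section

lemma Finset.prod_range_comp_succ_of_eq {M : Type*} [CommMonoid M] (f : ℕ → M) {k : ℕ}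
    (hk : f k = f 0) : ∏ t ∈ Finset.range k, f (t + 1) = ∏ t ∈ Finset.range k, f t := by
  cases k with
  | zero => rfl
  | succ m => rw [Finset.prod_range_succ, Finset.prod_range_succ' f, hk]

lemma NNReal.eq_of_prod_eq_of_le {ι : Type*} {s : Finset ι} {f g : ι → ℝ≥0}
    (hle : ∀ i ∈ s, f i ≤ g i) (hg : ∀ i ∈ s, g i ≠ 0) (h : ∏ i ∈ s, f i = ∏ i ∈ s, g i) :
    ∀ i ∈ s, f i = g i := by
  by_contra! ⟨i, hi, hne⟩
  have hf : ∀ j ∈ s, 0 < f j := fun j hj => pos_of_ne_zero fun h0 =>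
    Finset.prod_ne_zero_iff.mpr hg (h ▸ Finset.prod_eq_zero hj h0)
  exact (Finset.prod_lt_prod hf hle ⟨i, hi, (hle i hi).lt_of_ne hne⟩).ne h

lemma exists_lt_of_csInf_notMem {α : Type*} [ConditionallyCompleteLinearOrderBot α]
    {S : Set α} {a : α} (hS : sInf S ∉ S) (ha : a ∈ S) : ∃ s ∈ S, s < a :=
  exists_lt_of_csInf_lt ⟨a, ha⟩ <|
    (csInf_le (OrderBot.bddBelow S) ha).lt_of_ne fun h => hS (h ▸ ha)

namespace MaxAlg

section Cycle

variable {n : ℕ} {A : Matrix (Fin n) (Fin n) ℝ≥0} {lam : ℝ≥0} {x : Fin n → ℝ≥0} {k : ℕ}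
  {σ : ℕ → Fin n}

lemma cycleWeight_mul_prod (hσ : σ k = σ 0) :
    cycleWeight A k σ * ∏ t ∈ Finset.range k, x (σ t) =
      ∏ t ∈ Finset.range k, A (σ t) (σ (t + 1)) * x (σ (t + 1)) := by
  rw [Finset.prod_mul_distrib, cycleWeight,
    Finset.prod_range_comp_succ_of_eq (fun t => x (σ t)) (congrArg x hσ)]

lemma cycleWeight_eq_pow_of_saturated (hσ : σ k = σ 0) (hpos : ∀ j, x j ≠ 0)
    (hsat : ∀ t < k, A (σ t) (σ (t + 1)) * x (σ (t + 1)) = lam * x (σ t)) :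
    cycleWeight A k σ = lam ^ k := by
  have h := cycleWeight_mul_prod (A := A) (x := x) hσ
  rw [Finset.prod_congr rfl fun t ht => hsat t (Finset.mem_range.mp ht),
    Finset.prod_mul_distrib, Finset.prod_const, Finset.card_range] at h
  exact mul_right_cancel₀ (Finset.prod_ne_zero_iff.mpr fun t _ => hpos (σ t)) h

lemma saturated_of_cycleWeight_eq_pow (hσ : σ k = σ 0) (hpos : ∀ j, x j ≠ 0)
    (hle : ∀ i j, A i j * x j ≤ lam * x i) (hw : cycleWeight A k σ = lam ^ k) :
    ∀ t < k, A (σ t) (σ (t + 1)) * x (σ (t + 1)) = lam * x (σ t) := by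
  rcases eq_or_ne lam 0 with rfl | hlam
  · exact fun t _ => le_antisymm (hle _ _) (by simp)
  have hprod :
      ∏ t ∈ Finset.range k, lam * x (σ t) = lam ^ k * ∏ t ∈ Finset.range k, x (σ t) := by
    rw [Finset.prod_mul_distrib, Finset.prod_const, Finset.card_range]
  have h := (cycleWeight_mul_prod (A := A) (x := x) hσ).symm.trans (hw ▸ hprod.symm)
  intro t ht
  exact NNReal.eq_of_prod_eq_of_le (fun t _ => hle _ _)
    (fun t _ => mul_ne_zero hlam (hpos _)) h t (Finset.mem_range.mpr ht)

end Cycle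

lemma exists_cycle_of_perm {n : ℕ} (π : Equiv.Perm (Fin n)) (i : Fin n) :
    ∃ k σ, IsCycle k σ ∧ σ 0 = i ∧ ∀ t, σ (t + 1) = π (σ t) :=
  ⟨orderOf π, fun t => (π ^ t) i, ⟨orderOf_pos π, by simp [pow_orderOf_eq_one]⟩, by simp,
    fun t => by simp only [pow_succ', Equiv.Perm.mul_apply]⟩

section Eigenvector

variable {n : ℕ} {A : Matrix (Fin n) (Fin n) ℝ≥0} {lam : ℝ≥0} {x : Fin n → ℝ≥0}

lemma mul_le_of_mem_eigencone (hx : x ∈ eigencone A lam) (i j : Fin n) :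
    A i j * x j ≤ lam * x i :=
  congrFun hx i ▸ Finset.le_sup (f := fun j => A i j * x j) (Finset.mem_univ j)

lemma exists_mul_eq_of_mem_eigencone (hx : x ∈ eigencone A lam) (i : Fin n) :
    ∃ j, A i j * x j = lam * x i := by
  obtain ⟨j, -, hj⟩ := Finset.exists_mem_eq_sup Finset.univ ⟨i, Finset.mem_univ i⟩
    fun j => A i j * x j
  exact ⟨j, hj.symm.trans (congrFun hx i)⟩

lemma mul_eq_of_forall_ne_lt (hx : x ∈ eigencone A lam) {i j : Fin n}
    (hlt : ∀ j' ≠ j, A i j' * x j' < lam * x i) : A i j * x j = lam * x i := by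
  obtain ⟨j', hj'⟩ := exists_mul_eq_of_mem_eigencone hx i
  by_cases h : j' = j
  · exact h ▸ hj'
  · exact absurd hj' (hlt j' h).ne

lemma mem_Nlam (hx : x ∈ eigencone A lam) {i : Fin n} (hi : x i ≠ 0) : i ∈ Nlam A lam :=
  ⟨x, hx, pos_of_ne_zero hi⟩

lemma mulVec_update_of_forall_exists_ne (hx : x ∈ eigencone A lam) {j : Fin n} {s : ℝ≥0}
    (hs : s ≤ x j) (h : ∀ i, ∃ j' ≠ j, A i j' * x j' = lam * x i) :
    mulVec A (Function.update x j s) = fun i => lam * x i := by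
  funext i
  have hle : Function.update x j s ≤ x := update_le_iff.mpr ⟨hs, fun _ _ => le_rfl⟩
  apply le_antisymm
  · exact Finset.sup_le fun j' _ =>
      (mul_le_mul_right (hle j') _).trans (mul_le_of_mem_eigencone hx i j')
  · obtain ⟨j', hj'j, hj'⟩ := h i
    calc lam * x i = A i j' * Function.update x j s j' := by
          rw [Function.update_of_ne hj'j, hj']
      _ ≤ mulVec A (Function.update x j s) i :=
          Finset.le_sup (f := fun j'' => A i j'' * Function.update x j s j'')
            (Finset.mem_univ j')

variable {X : Fin n → Set ℝ≥0}

lemma exists_row_forall_ne_lt (hsimple : XSimple A lam X) (hopen : ∀ j, sInf (X j) ∉ X j)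
    (hx : x ∈ eigencone A lam ∩ box X) (j : Fin n) :
    ∃ i, ∀ j' ≠ j, A i j' * x j' < lam * x i := by
  by_contra! h
  obtain ⟨s, hsX, hslt⟩ := exists_lt_of_csInf_notMem (hopen j) (hx.2 j)
  have hmem : Function.update x j s ∈ box X := fun r => by
    rcases eq_or_ne r j with rfl | hr
    · simpa using hsX
    · simpa [Function.update_of_ne hr] using hx.2 r
  have hupd := mulVec_update_of_forall_exists_ne hx.1 hslt.le fun i => by
    obtain ⟨j', hj'j, hj'⟩ := h i
    exact ⟨j', hj'j, le_antisymm (mul_le_of_mem_eigencone hx.1 i j') hj'⟩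
  have := congrFun (hsimple x hx _ hmem hupd) j
  exact hslt.ne (by simpa using this)

lemma exists_perm_forall_ne_lt (hsimple : XSimple A lam X) (hopen : ∀ j, sInf (X j) ∉ X j)
    (hx : x ∈ eigencone A lam ∩ box X) :
    ∃ π : Equiv.Perm (Fin n), ∀ i j, j ≠ π i → A i j * x j < lam * x i := by
  choose r hr using exists_row_forall_ne_lt hsimple hopen hx
  have hinj : Function.Injective r := fun j j' hjj' => by
    by_contra hne
    exact (hr j' j hne).ne (hjj' ▸ mul_eq_of_forall_ne_lt hx.1 (hr j))
  let e := Equiv.ofBijective r (Finite.injective_iff_bijective.mp hinj)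
  refine ⟨e.symm, fun i j hj => ?_⟩
  have := hr (e.symm i) j hj
  rwa [show r (e.symm i) = i from e.apply_symm_apply i] at this

lemma critEdge_perm (hx : x ∈ eigencone A lam) (hpos : ∀ j, x j ≠ 0) (π : Equiv.Perm (Fin n))
    (hπ : ∀ i, A i (π i) * x (π i) = lam * x i) (i : Fin n) : CritEdge A lam i (π i) := by
  obtain ⟨k, σ, hcyc, hσ0, hσ⟩ := exists_cycle_of_perm π i
  refine ⟨k, σ, hcyc, fun t _ => mem_Nlam hx (hpos _), ?_, 0, hcyc.1, hσ0, by rw [hσ, hσ0]⟩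
  exact cycleWeight_eq_pow_of_saturated hcyc.2 hpos fun t _ => hσ t ▸ hπ (σ t)

lemma eq_of_critEdge (hx : x ∈ eigencone A lam) (hpos : ∀ j, x j ≠ 0) {π : Fin n → Fin n}
    (hπ : ∀ i j, j ≠ π i → A i j * x j < lam * x i) {i j : Fin n}
    (h : CritEdge A lam i j) : j = π i := by
  obtain ⟨k, σ, hcyc, -, hw, t, ht, rfl, rfl⟩ := h
  by_contra hne
  exact (hπ _ _ hne).ne <| saturated_of_cycleWeight_eq_pow hcyc.2 hpos
    (mul_le_of_mem_eigencone hx) hw t ht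

end Eigenvector

lemma CritEdge.critNode {n : ℕ} {A : Matrix (Fin n) (Fin n) ℝ≥0} {lam : ℝ≥0} {i j : Fin n}
    (h : CritEdge A lam i j) : CritNode A lam i :=
  let ⟨k, σ, hcyc, hin, hw, t, ht, hi, _⟩ := h
  ⟨k, σ, hcyc, hin, hw, t, ht, hi⟩

theorem stmt19_general {n : ℕ} (A : Matrix (Fin n) (Fin n) ℝ≥0) (lam : ℝ≥0)
    (X : Fin n → Set ℝ≥0)
    (hopen : ∀ j : Fin n, sInf (X j) ∉ X j)
    (hne : (eigencone A lam ∩ box X).Nonempty)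
    (hsimple : XSimple A lam X) :
    (∀ i : Fin n, CritNode A lam i) ∧
    (∀ i : Fin n, ∃! j : Fin n, CritEdge A lam i j) := by
  obtain ⟨x, hx⟩ := hne
  have hpos : ∀ j, x j ≠ 0 := fun j h0 => by
    obtain ⟨s, -, hs⟩ := exists_lt_of_csInf_notMem (hopen j) (hx.2 j)
    exact not_lt_zero (h0 ▸ hs)
  obtain ⟨π, hπ⟩ := exists_perm_forall_ne_lt hsimple hopen hx
  have hedge := critEdge_perm hx.1 hpos π fun i => mul_eq_of_forall_ne_lt hx.1 (hπ i)
  exact ⟨fun i => (hedge i).critNode,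
    fun i => ⟨π i, hedge i, fun j hj => eq_of_critEdge hx.1 hpos hπ hj⟩⟩

/-- if A has X-simple image eigencone for an x̲-open interval X,
then all nodes are critical and crit(A,λ) consists of disjoint cycles. -/
theorem stmt19 {n : ℕ} (A : Matrix (Fin n) (Fin n) ℝ≥0) (lam : ℝ≥0) (hlam : 0 < lam)
    (X : Fin n → Set ℝ≥0) (hX : IsInterval X)
    (hopen : ∀ j : Fin n, sInf (X j) ∉ X j)
    (hne : (eigencone A lam ∩ box X).Nonempty)
    (hsimple : XSimple A lam X) :
    (∀ i : Fin n, CritNode A lam i) ∧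
    (∀ i : Fin n, ∃! j : Fin n, CritEdge A lam i j) :=
  stmt19_general A lam X hopen hne hsimple

end MaxAlg

end
end
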